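/- Let S be a supercharacter theory of a finite group G and let g ∈ G. Then g is an S-Camina element (i.e., χ(g)=0 for every S-character χ not containing [G,S] in its kernel) if and only if Cl_S(g) = g[G,S], the full coset of g modulo [G,S]. -/

import Mathlib

/-
Write `D = [G,S]`. Every `S`-class `Cl_S(a)` lies in `aD`. Supercharacters are linearly
independent and there are as many of them as `S`-classes, so they span the superclass functions;
hence these are class functions, `S`-classes are unions of conjugacy classes and `D` is normal.
For irreducible `χ`, Schur's lemma applied to `∑_{d ∈ D} ρ(d)` gives
`∑_{d ∈ D} χ(xd) = |D| χ(x)` if `D ≤ ker χ` and `0` otherwise. The function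
`x ↦ ∑_{d ∈ D} σ_X(xd)` is again a superclass function, and pairing it with the constituents of
`σ_X` shows that either all or none of them contain `D` in their kernel; so this coset sum is
`|D| σ_X` if `D ≤ ker σ_X` and `0` otherwise.

If `Cl_S(g) = gD` then `σ_X` is constant on `gD`, so `σ_X(g) = 0` whenever `D ≰ ker σ_X`.
Conversely, at a Camina element the coset sum of any superclass function `φ` at `g` is
`|D| φ(g)`; for the indicator of `Cl_S(g)` this says that all of `gD` lies in `Cl_S(g)`.
-/
open scoped BigOperators Pointwise

/-- `f : G → ℂ` is an irreducible character of `G`. -/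
def IsIrrChar (G : Type) [Group G] [Fintype G] (f : G → ℂ) : Prop :=
  ∃ V : FDRep ℂ G, CategoryTheory.Simple V ∧ V.character = f

/-- A supercharacter theory of a finite group `G` (Diaconis–Isaacs): a partition
`parts` of the set of irreducible characters of `G` together with a partition of `G`
into `S`-classes (`cls g` is the class of `g`), such that `{1}` is a class, the number
of parts equals the number of classes, and each supercharacter
`σ_X = ∑ χ ∈ X, χ(1)·χ` is constant on every class. -/
structure SCT (G : Type) [Group G] [Fintype G] where
  parts : Finset (Finset (G → ℂ))
  cls : G → Set G
  parts_cover : ∀ f : G → ℂ, IsIrrChar G f ↔ ∃ X ∈ parts, f ∈ X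
  parts_disj : ∀ X ∈ parts, ∀ Y ∈ parts, X ≠ Y → Disjoint X Y
  parts_nonempty : ∀ X ∈ parts, X.Nonempty
  mem_cls : ∀ g : G, g ∈ cls g
  cls_eq : ∀ g h : G, h ∈ cls g → cls h = cls g
  cls_one : cls (1 : G) = {1}
  card_eq : parts.card = Nat.card (Set.range cls)
  const : ∀ X ∈ parts, ∀ g h : G, h ∈ cls g →
    (∑ χ ∈ X, χ 1 * χ h) = (∑ χ ∈ X, χ 1 * χ g)

variable {G : Type} [Group G] [Fintype G]

namespace SCT

/-- The supercharacter attached to a part `X`. -/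
noncomputable def superchar (_S : SCT G) (X : Finset (G → ℂ)) : G → ℂ := fun g => ∑ χ ∈ X, χ 1 * χ g

/-- The set `Irr(S)` of `S`-characters. -/
def Irr (S : SCT G) : Set (G → ℂ) := {f | ∃ X ∈ S.parts, f = S.superchar X}

end SCT

/-- The kernel of a character-like function `f : G → ℂ`. -/
def charKer (f : G → ℂ) : Subgroup G where
  carrier := {g | ∀ h, f (g * h) = f h}
  one_mem' := by intro h; simp
  mul_mem' := by intro a b ha hb h; rw [mul_assoc, ha, hb]
  inv_mem' := by
    intro a ha h
    have := ha (a⁻¹ * h)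
    rw [mul_inv_cancel_left] at this
    exact this.symm

namespace SCT

/-- `[H,S]`, the subgroup generated by the `g⁻¹k` with `g ∈ H`, `k ∈ Cl_S(g)`. -/
def comm (S : SCT G) (H : Subgroup G) : Subgroup G :=
  Subgroup.closure {x | ∃ g ∈ H, ∃ k ∈ S.cls g, x = g⁻¹ * k}

/-- `[G,S]`. -/
def derived (S : SCT G) : Subgroup G := S.comm ⊤

/-- `Irr(S | N)`: the `S`-characters whose kernel does not contain `N`. -/
def IrrRel (S : SCT G) (N : Subgroup G) : Set (G → ℂ) :=
  {f | f ∈ S.Irr ∧ ¬ N ≤ charKer f}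

/-- `g` is an `S`-Camina element: all of `Irr(S | [G,S])` vanishes at `g`. -/
def IsCaminaElt (S : SCT G) (g : G) : Prop :=
  ∀ f ∈ S.IrrRel S.derived, f g = 0

/-- `N` is `S`-normal: a union of `S`-classes. -/
def IsNormal (S : SCT G) (N : Subgroup G) : Prop :=
  ∀ g ∈ N, S.cls g ⊆ N

/-- `(G,N)` is a generalised `S`-Camina pair. -/
def IsGCP (S : SCT G) (N : Subgroup G) : Prop :=
  S.IsNormal N ∧ ∀ g : G, g ∉ N → S.IsCaminaElt g

/-- The set `Z(S)` of elements with singleton `S`-class. -/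
def centerSet (S : SCT G) : Set G := {g | S.cls g = {g}}

/-- The vanishing-off subgroup `V(S | N)`. -/
def V (S : SCT G) (N : Subgroup G) : Subgroup G :=
  Subgroup.closure {g | ∃ f ∈ S.IrrRel N, f g ≠ 0}

/-- `V(S) = V(S | [G,S])`. -/
def VS (S : SCT G) : Subgroup G := S.V S.derived

/-- `U(S | N)`: the product of all `S`-normal subgroups `H` with `V(S | H) ≤ N`. -/
def U (S : SCT G) (N : Subgroup G) : Subgroup G :=
  ⨆ (H : Subgroup G) (_ : S.IsNormal H ∧ S.V H ≤ N), H

/-- The upper `S`-central series: `ζ_0 = 1` and `ζ_{i+1}/ζ_i = Z(S^{G/ζ_i})`,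
i.e. `ζ_{i+1}` consists of the `g` whose `S`-class maps onto the single coset `gζ_i`. -/
def zeta (S : SCT G) : ℕ → Subgroup G
  | 0 => ⊥
  | i + 1 => Subgroup.closure {g | ∀ k ∈ S.cls g, g⁻¹ * k ∈ S.zeta i}

/-- The lower `S`-central series `γ_1 = G`, `γ_{i+1} = [γ_i, S]` (with `γ_0 := G`). -/
def gamma (S : SCT G) : ℕ → Subgroup G
  | 0 => ⊤
  | 1 => ⊤
  | n + 2 => S.comm (S.gamma (n + 1))

/-- The series `V_1(S) = V(S)`, `V_{i+1}(S) = [V_i(S), S]` (with `V_0 := V(S)`). -/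
def Vseq (S : SCT G) : ℕ → Subgroup G
  | 0 => S.VS
  | 1 => S.VS
  | n + 2 => S.comm (S.Vseq (n + 1))

/-- `G` is a `VZ(S)`-group: every member of `Irr(S | [G,S])` vanishes off `Z(S)`. -/
def IsVZ (S : SCT G) : Prop :=
  ∀ f ∈ S.IrrRel S.derived, ∀ g : G, g ∉ S.centerSet → f g = 0

end SCT

open CategoryTheory
open scoped Classical

namespace FDRep

variable (V : FDRep ℂ G) (N : Subgroup G)

theorem sum_ρ_mul_ρ_of_mem {n₀ : G} (hn₀ : n₀ ∈ N) :
    (∑ n : N, V.ρ n) * V.ρ n₀ = ∑ n : N, V.ρ n := by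
  simp only [Finset.sum_mul, ← map_mul]
  exact Fintype.sum_equiv (Equiv.mulRight ⟨n₀, hn₀⟩) _ _ fun _ => rfl

theorem sum_ρ_mul_comm [N.Normal] (g : G) :
    (∑ n : N, V.ρ n) * V.ρ g = V.ρ g * ∑ n : N, V.ρ n := by
  simp only [Finset.sum_mul, Finset.mul_sum, ← map_mul]
  refine Fintype.sum_equiv (MulAut.conjNormal g).symm.toEquiv _ _ fun n => ?_
  rw [MulEquiv.toEquiv_eq_coe, MulEquiv.coe_toEquiv, MulAut.conjNormal_symm_apply]
  group

theorem exists_sum_ρ_eq_smul_id [Simple V] [N.Normal] :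
    ∃ c : ℂ, ∑ n : N, V.ρ n = c • 1 := by
  let φ : V ⟶ V := ⟨InducedCategory.homMk (ModuleCat.ofHom (∑ n : N, V.ρ n)),
    fun g => FGModuleCat.hom_ext (V.sum_ρ_mul_comm N g)⟩
  obtain ⟨c, hc⟩ := endomorphism_simple_eq_smul_id ℂ φ
  exact ⟨c, (congrArg (fun ψ : V ⟶ V => ψ.hom.hom.hom) hc).symm⟩

end FDRep

namespace IsIrrChar

variable {f f' : G → ℂ}

theorem apply_mul_comm (hf : IsIrrChar G f) (a b : G) : f (a * b) = f (b * a) := by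
  obtain ⟨V, -, rfl⟩ := hf
  exact V.char_mul_comm b a

theorem apply_one_ne_zero (hf : IsIrrChar G f) : f 1 ≠ 0 := by
  obtain ⟨V, hV, rfl⟩ := hf
  rw [FDRep.char_one, Nat.cast_ne_zero]
  intro h
  have : Subsingleton V := Module.finrank_zero_iff.mp h
  refine id_nonzero V (Action.hom_ext _ _ (FGModuleCat.hom_ext (LinearMap.ext fun _ => ?_)))
  exact Subsingleton.elim _ _

theorem sum_mul_apply_inv (hf : IsIrrChar G f) (hf' : IsIrrChar G f') :
    ∑ x, f x * f' x⁻¹ = if f = f' then (Fintype.card G : ℂ) else 0 := by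
  obtain ⟨V, hV, rfl⟩ := hf
  obtain ⟨W, hW, rfl⟩ := hf'
  have orth (V W : FDRep ℂ G) [Simple V] [Simple W] :
      ∑ x, V.character x * W.character x⁻¹ =
        if Nonempty (V ≅ W) then (Fintype.card G : ℂ) else 0 := by
    have h := V.char_orthonormal W
    rw [inv_mul_eq_iff_eq_mul₀ (by simp)] at h
    rw [h, Nat.card_eq_fintype_card]
    split_ifs <;> simp
  by_cases h : V.character = W.character
  · rw [if_pos h, h, orth, if_pos ⟨Iso.refl W⟩]
  · rw [if_neg h, orth, if_neg fun ⟨i⟩ => h (FDRep.char_iso i)]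

theorem le_charKer_or_sum_apply_mul_eq_zero (hf : IsIrrChar G f) (N : Subgroup G) [N.Normal] :
    N ≤ charKer f ∨ ∀ x, ∑ n : N, f (x * n) = 0 := by
  obtain ⟨V, hV, rfl⟩ := hf
  obtain ⟨c, hc⟩ := V.exists_sum_ρ_eq_smul_id N
  by_cases hc0 : c = 0
  · refine Or.inr fun x => ?_
    simp only [FDRep.character, map_mul, ← map_sum, ← Finset.mul_sum, hc, hc0, zero_smul,
      mul_zero, map_zero]
  · refine Or.inl fun n hn x => ?_
    have hρn : V.ρ n = 1 := by
      have h := V.sum_ρ_mul_ρ_of_mem N hn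
      rw [hc] at h
      exact smul_right_injective _ hc0 (by simpa using h)
    simp [FDRep.character, hρn]

theorem sum_apply_mul_mem (hf : IsIrrChar G f) (N : Subgroup G) [N.Normal] (x : G) :
    ∑ n : N, f (x * n) = if N ≤ charKer f then (Fintype.card N : ℂ) * f x else 0 := by
  split_ifs with hN
  · have hfn (n : N) : f (x * n) = f x := by rw [hf.apply_mul_comm]; exact hN n.2 x
    simp [hfn]
  · exact (hf.le_charKer_or_sum_apply_mul_eq_zero N).resolve_left hN x

end IsIrrChar

def charPairing (χ : G → ℂ) : (G → ℂ) →ₗ[ℂ] ℂ where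
  toFun φ := ∑ x, φ x * χ x⁻¹
  map_add' φ ψ := by simp only [Pi.add_apply, add_mul, Finset.sum_add_distrib]
  map_smul' c φ := by simp only [Pi.smul_apply, smul_eq_mul, mul_assoc, ← Finset.mul_sum,
    RingHom.id_apply]

theorem charPairing_apply (χ φ : G → ℂ) : charPairing χ φ = ∑ x, φ x * χ x⁻¹ := rfl

theorem charPairing_sum_smul {s : Finset (G → ℂ)} (hs : ∀ θ ∈ s, IsIrrChar G θ) {χ : G → ℂ}
    (hχ : IsIrrChar G χ) (a : (G → ℂ) → ℂ) :
    charPairing χ (∑ θ ∈ s, a θ • θ) = if χ ∈ s then a χ * Fintype.card G else 0 := by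
  rw [map_sum]
  simp_rw [map_smul, charPairing_apply]
  rw [Finset.sum_congr rfl fun θ hθ => by rw [(hs θ hθ).sum_mul_apply_inv hχ]]
  simp

noncomputable def cosetSum (N : Subgroup G) : (G → ℂ) →ₗ[ℂ] G → ℂ where
  toFun φ x := ∑ n : N, φ (x * n)
  map_add' φ ψ := by ext x; simp only [Pi.add_apply, Finset.sum_add_distrib]
  map_smul' c φ := by ext x; simp only [Pi.smul_apply, smul_eq_mul, ← Finset.mul_sum,
    RingHom.id_apply]

theorem cosetSum_apply (N : Subgroup G) (φ : G → ℂ) (x : G) :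
    cosetSum N φ x = ∑ n : N, φ (x * n) := rfl

theorem cosetSum_apply_mul_mem {N : Subgroup G} (φ : G → ℂ) (x : G) {n₀ : G} (hn₀ : n₀ ∈ N) :
    cosetSum N φ (x * n₀) = cosetSum N φ x := by
  simp only [cosetSum_apply, mul_assoc]
  exact Fintype.sum_equiv (Equiv.mulLeft ⟨n₀, hn₀⟩) _ _ fun _ => rfl

namespace SCT

variable (S : SCT G) {X : Finset (G → ℂ)} {χ χ' φ : G → ℂ}

theorem isIrrChar_of_mem (hX : X ∈ S.parts) (hχ : χ ∈ X) : IsIrrChar G χ :=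
  (S.parts_cover χ).mpr ⟨X, hX, hχ⟩

theorem eq_of_mem_of_mem {Y : Finset (G → ℂ)} (hX : X ∈ S.parts) (hY : Y ∈ S.parts)
    (hχX : χ ∈ X) (hχY : χ ∈ Y) : X = Y := by
  by_contra h
  exact Finset.disjoint_left.mp (S.parts_disj X hX Y hY h) hχX hχY

theorem mem_cls_iff_cls_eq {a b : G} : b ∈ S.cls a ↔ S.cls b = S.cls a :=
  ⟨S.cls_eq a b, fun h => h ▸ S.mem_cls b⟩

theorem superchar_eq_sum : S.superchar X = ∑ θ ∈ X, θ 1 • θ := by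
  ext x
  simp [superchar, Finset.sum_apply]

theorem charPairing_superchar (hX : X ∈ S.parts) (hχ : IsIrrChar G χ) :
    charPairing χ (S.superchar X) = if χ ∈ X then χ 1 * Fintype.card G else 0 := by
  rw [superchar_eq_sum]
  exact charPairing_sum_smul (fun θ => S.isIrrChar_of_mem hX) hχ _

theorem linearIndependent_superchar :
    LinearIndependent ℂ fun X : S.parts => S.superchar X := by
  rw [Fintype.linearIndependent_iff]
  intro c hc X
  obtain ⟨χ, hχ⟩ := S.parts_nonempty X X.2
  have hχirr := S.isIrrChar_of_mem X.2 hχ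
  have h := congrArg (charPairing χ) hc
  rw [map_sum, map_zero, Finset.sum_eq_single X] at h
  · rw [map_smul, S.charPairing_superchar X.2 hχirr, if_pos hχ, smul_eq_mul] at h
    simpa [hχirr.apply_one_ne_zero] using h
  · intro Y _ hYX
    rw [map_smul, S.charPairing_superchar Y.2 hχirr, if_neg, smul_zero]
    exact fun hχY => hYX (Subtype.ext (S.eq_of_mem_of_mem Y.2 X.2 hχY hχ))
  · simp

def superclassFunctions : Submodule ℂ (G → ℂ) where
  carrier := {φ | ∀ a b, b ∈ S.cls a → φ b = φ a}
  add_mem' hφ hψ a b hab := by simp [hφ a b hab, hψ a b hab]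
  zero_mem' _ _ _ := rfl
  smul_mem' c φ hφ a b hab := by simp [hφ a b hab]

theorem superchar_mem_superclassFunctions (hX : X ∈ S.parts) :
    S.superchar X ∈ S.superclassFunctions :=
  S.const X hX

theorem indicator_cls_mem_superclassFunctions (g : G) :
    (S.cls g).indicator 1 ∈ S.superclassFunctions := by
  intro a b hab
  simp only [Set.indicator_apply, S.mem_cls_iff_cls_eq, S.cls_eq a b hab, Pi.one_apply]

theorem finrank_superclassFunctions_le :
    Module.finrank ℂ S.superclassFunctions ≤ Nat.card (Set.range S.cls) := by
  let restrict := LinearMap.funLeft ℂ ℂ (Set.rangeFactorization S.cls)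
  have hle : S.superclassFunctions ≤ LinearMap.range restrict := by
    intro φ hφ
    have hfac : Function.FactorsThrough φ (Set.rangeFactorization S.cls) := fun a b hab =>
      (hφ a b ((S.mem_cls_iff_cls_eq).mpr (congrArg Subtype.val hab).symm)).symm
    exact ⟨Function.extend _ φ 0, funext (hfac.extend_apply 0)⟩
  calc Module.finrank ℂ S.superclassFunctions
      ≤ Module.finrank ℂ (LinearMap.range restrict) := Submodule.finrank_mono hle
    _ ≤ Module.finrank ℂ (Set.range S.cls → ℂ) := LinearMap.finrank_range_le _
    _ = Nat.card (Set.range S.cls) := by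
      rw [Module.finrank_fintype_fun_eq_card, Nat.card_eq_fintype_card]

theorem span_superchar :
    Submodule.span ℂ (Set.range fun X : S.parts => S.superchar X) = S.superclassFunctions := by
  refine Submodule.eq_of_le_of_finrank_le
    (Submodule.span_le.mpr (Set.range_subset_iff.mpr fun X =>
      S.superchar_mem_superclassFunctions X.2)) ?_
  rw [finrank_span_eq_card S.linearIndependent_superchar, Fintype.card_coe, S.card_eq]
  exact S.finrank_superclassFunctions_le

variable {S} in
theorem apply_mul_comm_of_mem (hφ : φ ∈ S.superclassFunctions) (a b : G) :
    φ (a * b) = φ (b * a) := by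
  rw [← S.span_superchar] at hφ
  induction hφ using Submodule.span_induction with
  | mem _ h =>
    obtain ⟨X, rfl⟩ := h
    exact Finset.sum_congr rfl fun θ hθ => by
      rw [(S.isIrrChar_of_mem X.2 hθ).apply_mul_comm]
  | zero => rfl
  | add _ _ _ _ h h' => simp only [Pi.add_apply, h, h']
  | smul c _ _ h => simp only [Pi.smul_apply, h]

theorem conj_mem_cls {a k : G} (hk : k ∈ S.cls a) (t : G) : t * k * t⁻¹ ∈ S.cls a := by
  have h := apply_mul_comm_of_mem (S.indicator_cls_mem_superclassFunctions a) (t * k) t⁻¹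
  rw [inv_mul_cancel_left, Set.indicator_of_mem hk] at h
  by_contra hnot
  rw [Set.indicator_of_notMem hnot] at h
  exact zero_ne_one h

theorem inv_mul_mem_derived {a k : G} (hk : k ∈ S.cls a) : a⁻¹ * k ∈ S.derived :=
  Subgroup.subset_closure ⟨a, trivial, k, hk, rfl⟩

theorem cls_subset_coset (a : G) : S.cls a ⊆ a • (S.derived : Set G) :=
  fun k hk => ⟨a⁻¹ * k, S.inv_mul_mem_derived hk, mul_inv_cancel_left a k⟩

instance derived_normal : S.derived.Normal := by
  set gens := {x | ∃ g ∈ (⊤ : Subgroup G), ∃ k ∈ S.cls g, x = g⁻¹ * k}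
  have hconj : Group.conjugatesOfSet gens ⊆ gens := by
    intro x hx
    obtain ⟨_, ⟨g, -, k, hk, rfl⟩, hgk⟩ := Group.mem_conjugatesOfSet_iff.mp hx
    obtain ⟨t, rfl⟩ := isConj_iff.mp hgk
    refine ⟨t * g * t⁻¹, trivial, t * k * t⁻¹, ?_, by group⟩
    rw [S.cls_eq g _ (S.conj_mem_cls (S.mem_cls g) t)]
    exact S.conj_mem_cls hk t
  have : S.derived = Subgroup.normalClosure gens :=
    le_antisymm (Subgroup.closure_mono Group.subset_conjugatesOfSet)
      (Subgroup.closure_mono hconj)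
  rw [this]
  infer_instance

theorem cosetSum_mem_superclassFunctions {N : Subgroup G} (hN : S.derived ≤ N) (φ : G → ℂ) :
    cosetSum N φ ∈ S.superclassFunctions := by
  intro a b hab
  rw [← mul_inv_cancel_left a b, cosetSum_apply_mul_mem φ a (hN (S.inv_mul_mem_derived hab))]

theorem degree_mul_charPairing_eq (hφ : φ ∈ S.superclassFunctions) (hX : X ∈ S.parts)
    (hχ : χ ∈ X) (hχ' : χ' ∈ X) :
    χ' 1 * charPairing χ φ = χ 1 * charPairing χ' φ := by
  rw [← S.span_superchar] at hφ
  induction hφ using Submodule.span_induction with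
  | mem _ h =>
    obtain ⟨Y, rfl⟩ := h
    rw [S.charPairing_superchar Y.2 (S.isIrrChar_of_mem hX hχ),
      S.charPairing_superchar Y.2 (S.isIrrChar_of_mem hX hχ')]
    have hmem : χ ∈ (Y : Finset (G → ℂ)) ↔ χ' ∈ (Y : Finset (G → ℂ)) :=
      ⟨fun h => S.eq_of_mem_of_mem hX Y.2 hχ h ▸ hχ',
        fun h => S.eq_of_mem_of_mem hX Y.2 hχ' h ▸ hχ⟩
    simp only [hmem]
    split_ifs <;> ring
  | zero => simp
  | add _ _ _ _ h h' => simp only [map_add, mul_add, h, h']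
  | smul c _ _ h => simp only [map_smul, smul_eq_mul, mul_left_comm _ c, h]

theorem cosetSum_superchar_eq_sum (N : Subgroup G) [N.Normal] (hX : X ∈ S.parts) :
    cosetSum N (S.superchar X) =
      ∑ θ ∈ X, (if N ≤ charKer θ then θ 1 * Fintype.card N else 0) • θ := by
  ext x
  simp only [cosetSum_apply, superchar, Finset.sum_apply, Pi.smul_apply, smul_eq_mul]
  rw [Finset.sum_comm]
  refine Finset.sum_congr rfl fun θ hθ => ?_
  rw [← Finset.mul_sum, (S.isIrrChar_of_mem hX hθ).sum_apply_mul_mem N x]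
  split_ifs <;> ring

theorem le_charKer_iff_of_mem {N : Subgroup G} [N.Normal] (hN : S.derived ≤ N)
    (hX : X ∈ S.parts) (hχ : χ ∈ X) (hχ' : χ' ∈ X) : N ≤ charKer χ ↔ N ≤ charKer χ' := by
  have h := S.degree_mul_charPairing_eq (S.cosetSum_mem_superclassFunctions hN (S.superchar X))
    hX hχ hχ'
  have hirr := fun θ (hθ : θ ∈ X) => S.isIrrChar_of_mem hX hθ
  rw [S.cosetSum_superchar_eq_sum N hX, charPairing_sum_smul hirr (hirr χ hχ),
    charPairing_sum_smul hirr (hirr χ' hχ'), if_pos hχ, if_pos hχ'] at h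
  have h1 := (hirr χ hχ).apply_one_ne_zero
  have h1' := (hirr χ' hχ').apply_one_ne_zero
  split_ifs at h <;> simp_all

theorem cosetSum_superchar {N : Subgroup G} [N.Normal] (hN : S.derived ≤ N)
    (hX : X ∈ S.parts) (x : G) :
    cosetSum N (S.superchar X) x =
      if N ≤ charKer (S.superchar X) then Fintype.card N * S.superchar X x else 0 := by
  split_ifs with hker
  · have hσn (n : N) : S.superchar X (x * n) = S.superchar X x := by
      rw [apply_mul_comm_of_mem (S.superchar_mem_superclassFunctions hX)]
      exact hker n.2 x
    simp [cosetSum_apply, hσn]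
  · obtain ⟨θ, hθ, hθker⟩ : ∃ θ ∈ X, ¬ N ≤ charKer θ := by
      by_contra! hall
      refine hker fun n hn y => Finset.sum_congr rfl fun θ hθ => ?_
      rw [hall θ hθ hn y]
    rw [S.cosetSum_superchar_eq_sum N hX, Finset.sum_apply]
    refine Finset.sum_eq_zero fun θ' hθ' => ?_
    rw [if_neg ((S.le_charKer_iff_of_mem hN hX hθ hθ').not.mp hθker), zero_smul, Pi.zero_apply]

variable {S} in
theorem IsCaminaElt.cosetSum_eq {g : G} (hg : S.IsCaminaElt g)
    (hφ : φ ∈ S.superclassFunctions) :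
    cosetSum S.derived φ g = Fintype.card S.derived * φ g := by
  rw [← S.span_superchar] at hφ
  obtain ⟨c, rfl⟩ := (Submodule.mem_span_range_iff_exists_fun ℂ).mp hφ
  simp only [map_sum, map_smul, Finset.sum_apply, Pi.smul_apply, smul_eq_mul, Finset.mul_sum]
  refine Finset.sum_congr rfl fun X _ => ?_
  rw [S.cosetSum_superchar le_rfl X.2]
  split_ifs with hker
  · ring
  · rw [hg _ ⟨⟨X, X.2, rfl⟩, hker⟩, mul_zero, mul_zero]

end SCT

/-- `g` is an `S`-Camina element iff `Cl_S(g) = g[G,S]`. -/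
theorem caminaElt_iff_cls_eq_coset (S : SCT G) (g : G) :
    S.IsCaminaElt g ↔ S.cls g = g • (S.derived : Set G) := by
  refine ⟨fun hg => (S.cls_subset_coset g).antisymm ?_, fun hcls => ?_⟩
  · have h := hg.cosetSum_eq (S.indicator_cls_mem_superclassFunctions g)
    simp only [cosetSum_apply, Set.indicator_apply, Pi.one_apply, Finset.sum_boole,
      if_pos (S.mem_cls g), mul_one, Nat.cast_inj] at h
    rw [← Finset.card_univ, Finset.card_filter_eq_iff] at h
    rintro _ ⟨n, hn, rfl⟩
    exact h ⟨n, hn⟩ (Finset.mem_univ _)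
  · rintro σ ⟨⟨X, hX, rfl⟩, hker⟩
    have h := S.cosetSum_superchar le_rfl hX g
    have hσn (n : S.derived) : S.superchar X (g * n) = S.superchar X g :=
      S.const X hX g _ (hcls ▸ ⟨n, n.2, rfl⟩)
    simp only [cosetSum_apply, hσn, if_neg hker, Finset.sum_const, Finset.card_univ,
      nsmul_eq_mul, mul_eq_zero, Nat.cast_eq_zero, Fintype.card_ne_zero, false_or] at h
    exact h
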